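/- arXiv:1304.1772 — 4 statements merged into one kernel-verified Lean document; each statement's English description precedes it below -/
import Mathlib

section
/- For any n×n complex matrix M, (−1)^n · per(M) = ∑_{π ∈ P([n])} (−1)^{↓#π} · ∏_{b ∈ π} det(M[b]), where the sum is over all set partitions of {1,…,n} and (−1)^{↓j} = (−1)(−2)⋯(−j) = (−1)^j · j!. -/
open Finset

/-- Number of cycles of a permutation, counting fixed points as 1-cycles. -/
def numCycles {β : Type*} [Fintype β] [DecidableEq β] (σ : Equiv.Perm β) : ℕ :=
  σ.cycleType.card + (Finset.univ.filter fun i => σ i = i).card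

/-- The α-permanent of a square matrix: ∑_σ α^{#σ} ∏_j M_{j,σ(j)}. -/
noncomputable def aper {β : Type*} [Fintype β] [DecidableEq β]
    (α : ℂ) (M : Matrix β β ℂ) : ℂ :=
  ∑ σ : Equiv.Perm β, α ^ numCycles σ * ∏ j, M j (σ j)

/-- Falling factorial x(x-1)⋯(x-j+1). -/
def fallF (x : ℂ) (j : ℕ) : ℂ := ∏ i ∈ Finset.range j, (x - i)

/-- Rising factorial x(x+1)⋯(x+m-1). -/
def riseF (x : ℂ) (m : ℕ) : ℂ := ∏ i ∈ Finset.range m, (x + i)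

/-- Principal submatrix of `M` indexed by the finset `b`. -/
def subM {n : ℕ} (M : Matrix (Fin n) (Fin n) ℂ) (b : Finset (Fin n)) :
    Matrix b b ℂ :=
  M.submatrix (fun i => (i : Fin n)) (fun j => (j : Fin n))

/-! Expanding every `det (M[b])` by the Leibniz formula, `∏_{b ∈ π} det (M[b])` is the signed
sum over the permutations `σ` whose cycles each lie inside a block of `π`. Exchanging the two sums,
the coefficient of `σ` is `sign σ` times `∑_π x^{↓#π}` over the partitions `π` whose blocks are
unions of cycles of `σ`, i.e. over the partitions of the set of cycles; the Stirling-type identity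
`∑_{π ∈ P(k)} x^{↓#π} = x^k` turns it into `sign σ · x^{#cycles σ}`. At `x = -1` this is
`(-1)^n`, since `sign σ = (-1)^{n - #cycles σ}`. -/

open Equiv Equiv.Perm

namespace Finpartition

variable {ι : Type*} [DecidableEq ι] {s B : Finset ι}

theorem parts_avoid_of_mem (π : Finpartition s) (hB : B ∈ π.parts) :
    (π.avoid B).parts = π.parts.erase B := by
  ext c
  rw [mem_avoid, mem_erase]
  constructor
  · rintro ⟨d, hd, hdB, rfl⟩
    have hne : d ≠ B := fun h => hdB h.le
    have hdisj : Disjoint d B := π.disjoint hd hB hne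
    rw [sdiff_eq_self_of_disjoint hdisj]
    exact ⟨hne, hd⟩
  · rintro ⟨hcB, hc⟩
    obtain ⟨z, hz⟩ := π.nonempty_of_mem_parts hc
    have hdisj : Disjoint c B := π.disjoint hc hB hcB
    exact ⟨c, hc, fun hle => disjoint_left.1 hdisj hz (hle hz), sdiff_eq_self_of_disjoint hdisj⟩

theorem image_part (π : Finpartition s) : s.image π.part = π.parts := by
  ext B
  simp only [mem_image]
  constructor
  · rintro ⟨i, hi, rfl⟩
    exact π.part_mem.2 hi
  · intro hB
    obtain ⟨i, hi⟩ := π.nonempty_of_mem_parts hB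
    exact ⟨i, π.le hB hi, π.part_eq_of_mem hB hi⟩

theorem sum_filter_part_eq {R : Type*} [AddCommMonoid R] {a : ι} (haB : a ∈ B) (hBs : B ⊆ s)
    (P : Finset ι → Prop) [DecidablePred P] (hPB : P B) (G : Finset (Finset ι) → R) :
    ∑ π : Finpartition s with (∀ b ∈ π.parts, P b) ∧ π.part a = B, G π.parts =
      ∑ π : Finpartition (s \ B) with ∀ b ∈ π.parts, P b, G (insert B π.parts) := by
  have hB : B ≠ ⊥ := ne_empty_of_mem haB
  have hsup : s \ B ⊔ B = s := sdiff_union_of_subset hBs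
  have mem_parts {π : Finpartition s} (h : π.part a = B) : B ∈ π.parts :=
    h ▸ π.part_mem.2 (hBs haB)
  refine sum_nbij' (·.avoid B) (·.extend hB sdiff_disjoint hsup) ?_ ?_ ?_ ?_ ?_
  · simp only [mem_filter, mem_univ, true_and, and_imp]
    intro π hP ha b hb
    rw [parts_avoid_of_mem π (mem_parts ha)] at hb
    exact hP b (mem_of_mem_erase hb)
  · simp only [mem_filter, mem_univ, true_and, extend_parts, forall_mem_insert]
    exact fun π hP => ⟨⟨hPB, hP⟩, part_eq_of_mem _ (mem_insert_self _ _) haB⟩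
  · simp only [mem_filter, mem_univ, true_and, and_imp]
    intro π _ ha
    ext1
    rw [extend_parts, parts_avoid_of_mem π (mem_parts ha), insert_erase (mem_parts ha)]
  · intro π _
    have hBπ : B ∉ π.parts := fun h => (mem_sdiff.1 (π.le h haB)).2 haB
    ext1
    rw [parts_avoid_of_mem _ (by simp), extend_parts, erase_insert hBπ]
  · simp only [mem_filter, mem_univ, true_and, and_imp]
    intro π _ ha
    rw [parts_avoid_of_mem π (mem_parts ha), insert_erase (mem_parts ha)]

end Finpartition

theorem fallF_succ (x : ℂ) (k : ℕ) : fallF x (k + 1) = x * fallF (x - 1) k := by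
  rw [fallF, prod_range_succ', fallF, mul_comm]
  simp only [CharP.cast_eq_zero, sub_zero, Nat.cast_succ, sub_add_eq_sub_sub_swap]

section Saturated

variable {ι κ : Type*} {f : ι → κ} {s b : Finset ι}

def IsSaturated (f : ι → κ) (b : Finset ι) : Prop := ∀ ⦃c d⦄, c ∈ b → f d = f c → d ∈ b

instance [Fintype ι] [DecidableEq ι] [DecidableEq κ] (f : ι → κ) :
    DecidablePred (IsSaturated f) := fun b => by
  unfold IsSaturated; infer_instance

theorem IsSaturated.filter (hs : IsSaturated f s) (p : κ → Prop) [DecidablePred p] :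
    IsSaturated f (s.filter fun c => p (f c)) := by
  intro c d hc hdc
  rw [mem_filter] at hc ⊢
  exact ⟨hs hc.1 hdc, hdc ▸ hc.2⟩

theorem IsSaturated.filter_mem_image [DecidableEq κ] (hb : IsSaturated f b) (hbs : b ⊆ s) :
    s.filter (fun c => f c ∈ b.image f) = b := by
  ext c
  simp only [mem_filter, mem_image]
  exact ⟨fun ⟨_, d, hd, hdc⟩ => hb hd hdc.symm, fun hc => ⟨hbs hc, c, hc, rfl⟩⟩

theorem image_filter_mem_of_subset [DecidableEq κ] {T : Finset κ} (hT : T ⊆ s.image f) :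
    (s.filter fun c => f c ∈ T).image f = T := by
  ext y
  simp only [mem_image, mem_filter]
  grind

theorem image_sdiff_filter_mem [DecidableEq ι] [DecidableEq κ] (T : Finset κ) :
    (s \ s.filter fun c => f c ∈ T).image f = s.image f \ T := by
  ext y
  simp only [mem_image, mem_sdiff, mem_filter]
  grind

theorem IsSaturated.sdiff [DecidableEq ι] (hs : IsSaturated f s) (hb : IsSaturated f b) :
    IsSaturated f (s \ b) := by
  intro c d hc hdc
  rw [mem_sdiff] at hc ⊢
  exact ⟨hs hc.1 hdc, fun hd => hc.2 (hb hd hdc.symm)⟩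

theorem IsSaturated.image_erase_eq_iff [DecidableEq κ] (hb : IsSaturated f b) (hbs : b ⊆ s)
    {a : ι} (ha : a ∈ b) {t : Finset κ} (ht : t ⊆ (s.image f).erase (f a)) :
    (b.image f).erase (f a) = t ↔ b = s.filter fun c => f c ∈ insert (f a) t := by
  constructor
  · rintro rfl
    rw [insert_erase (mem_image_of_mem f ha), hb.filter_mem_image hbs]
  · rintro rfl
    have hT : insert (f a) t ⊆ s.image f :=
      insert_subset (mem_image_of_mem f (mem_filter.1 ha).1) (ht.trans (erase_subset _ _))
    rw [image_filter_mem_of_subset hT, erase_insert fun h => (mem_erase.1 (ht h)).1 rfl]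

theorem sum_isSaturated_eq_sum_powerset_erase [DecidableEq ι] [DecidableEq κ]
    [DecidablePred (IsSaturated f)] {R : Type*} [AddCommMonoid R] {a : ι} (ha : a ∈ s)
    (F : Finset (Finset ι) → R) :
    ∑ π : Finpartition s with ∀ b ∈ π.parts, IsSaturated f b, F π.parts =
      ∑ t ∈ ((s.image f).erase (f a)).powerset,
        ∑ π : Finpartition s with (∀ b ∈ π.parts, IsSaturated f b) ∧
          π.part a = s.filter (fun c => f c ∈ insert (f a) t), F π.parts := by
  rw [← sum_fiberwise_of_maps_to (g := fun π => ((π.part a).image f).erase (f a))]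
  · refine sum_congr rfl fun t ht => ?_
    rw [filter_filter]
    refine sum_congr (filter_congr fun π _ => and_congr_right fun hπ => ?_) fun _ _ => rfl
    exact (hπ _ (π.part_mem.2 ha)).image_erase_eq_iff (π.part_subset a) (π.mem_part ha)
      (mem_powerset.1 ht)
  · intro π _
    exact mem_powerset.2 (erase_subset_erase _ (image_subset_image (π.part_subset a)))

theorem sum_fallF_card_parts_of_isSaturated [DecidableEq ι] [DecidableEq κ]
    [DecidablePred (IsSaturated f)] (hs : IsSaturated f s) (x : ℂ) :
    ∑ π : Finpartition s with ∀ b ∈ π.parts, IsSaturated f b, fallF x #π.parts =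
      x ^ #(s.image f) := by
  induction s using Finset.strongInduction generalizing x with | H s ih =>
  rcases s.eq_empty_or_nonempty with rfl | ⟨a, ha⟩
  · have hparts (π : Finpartition (∅ : Finset ι)) : π.parts = ∅ := π.parts_eq_empty_iff.2 rfl
    simpa [fallF, hparts] using Fintype.card_unique (α := Finpartition (⊥ : Finset ι))
  -- The block `B` of `a` is the union of the fibres over `insert (f a) t` for some `t ⊆ O`;
  -- removing it leaves `#O - #t` fibres, and `x^{↓(k+1)} = x · (x-1)^{↓k}`.
  set O := (s.image f).erase (f a)
  have sum_part_eq {t} (ht : t ⊆ O) :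
      ∑ π : Finpartition s with (∀ b ∈ π.parts, IsSaturated f b) ∧
        π.part a = s.filter (fun c => f c ∈ insert (f a) t), fallF x #π.parts =
        x * (x - 1) ^ (#O - #t) := by
    set B := s.filter fun c => f c ∈ insert (f a) t
    have haB : a ∈ B := mem_filter.2 ⟨ha, mem_insert_self _ _⟩
    have hB : IsSaturated f B := hs.filter (· ∈ insert (f a) t)
    have card_insert (π : Finpartition (s \ B)) : #(insert B π.parts) = #π.parts + 1 :=
      card_insert_of_notMem fun h => (mem_sdiff.1 (π.le h haB)).2 haB
    have card_image : #((s \ B).image f) = #O - #t := by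
      rw [image_sdiff_filter_mem, sdiff_insert, ← erase_sdiff_comm, card_sdiff_of_subset ht]
    rw [Finpartition.sum_filter_part_eq haB (filter_subset _ _) _ hB fun parts => fallF x #parts,
      sum_congr rfl fun π _ => by rw [card_insert, fallF_succ], ← mul_sum,
      ih _ (sdiff_ssubset (filter_subset _ _) ⟨a, haB⟩) (hs.sdiff hB), card_image]
  calc ∑ π : Finpartition s with ∀ b ∈ π.parts, IsSaturated f b, fallF x #π.parts
      = ∑ t ∈ O.powerset, ∑ π : Finpartition s with (∀ b ∈ π.parts, IsSaturated f b) ∧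
          π.part a = s.filter (fun c => f c ∈ insert (f a) t), fallF x #π.parts :=
        sum_isSaturated_eq_sum_powerset_erase (f := f) ha fun parts => fallF x #parts
    _ = ∑ t ∈ O.powerset, x * (x - 1) ^ (#O - #t) :=
        sum_congr rfl fun t ht => sum_part_eq (mem_powerset.1 ht)
    _ = x ^ #(s.image f) := by
        have := sum_pow_mul_eq_add_pow (1 : ℂ) (x - 1) O
        simp only [one_pow, one_mul, add_sub_cancel] at this
        rw [← mul_sum, this, ← pow_succ', card_erase_add_one (mem_image_of_mem f ha)]

end Saturated

namespace Equiv.Perm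

variable {ι : Type*} [Fintype ι] [DecidableEq ι] (σ : Perm ι)

/-- Fixed points all have `cycleOf = 1`, so they are labelled by themselves. -/
def cycleLabel (a : ι) : Perm ι ⊕ ι :=
  if a ∈ σ.support then .inl (σ.cycleOf a) else .inr a

variable {σ}

theorem cycleLabel_eq_iff {a b : ι} : σ.cycleLabel a = σ.cycleLabel b ↔ σ.SameCycle a b := by
  unfold cycleLabel
  by_cases ha : a ∈ σ.support <;> by_cases hb : b ∈ σ.support
  · simp [ha, hb, sameCycle_iff_cycleOf_eq_of_mem_support ha hb]
  · simpa [ha, hb] using fun h => hb (h.mem_support_iff.1 ha)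
  · simpa [ha, hb] using fun h => ha (h.mem_support_iff.2 hb)
  · simp only [ha, hb, if_false, Sum.inr.injEq]
    exact ⟨fun h => h ▸ SameCycle.refl _ _, fun h => h.eq_of_left (notMem_support.1 ha)⟩

theorem image_cycleLabel_univ :
    univ.image σ.cycleLabel = σ.cycleFactorsFinset.disjSum σ.supportᶜ := by
  ext (c | a)
  · simp only [mem_image, mem_univ, true_and, inl_mem_disjSum, cycleLabel]
    constructor
    · rintro ⟨a, h⟩
      split_ifs at h with ha
      exact Sum.inl_injective h ▸ cycleOf_mem_cycleFactorsFinset_iff.2 ha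
    · intro hc
      obtain ⟨a, ha⟩ := (mem_cycleFactorsFinset_iff.1 hc).1.nonempty_support
      refine ⟨a, ?_⟩
      rw [if_pos (mem_cycleFactorsFinset_support_le hc ha),
        ← (eq_cycleOf_of_mem_cycleFactorsFinset_iff σ c hc a).2 ha]
  · simp only [mem_image, mem_univ, true_and, inr_mem_disjSum, mem_compl, cycleLabel]
    constructor
    · rintro ⟨b, h⟩
      split_ifs at h with hb
      exact Sum.inr_injective h ▸ hb
    · intro ha
      exact ⟨a, if_neg ha⟩

theorem sign_mul_neg_one_pow_card_image_cycleLabel :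
    ((sign σ : ℤ) : ℂ) * (-1) ^ #(univ.image σ.cycleLabel) = (-1) ^ Fintype.card ι := by
  have hcard : Multiset.card σ.cycleType = #σ.cycleFactorsFinset := by
    rw [cycleType_def, Multiset.card_map]; rfl
  have hsupp : #σ.support ≤ Fintype.card ι := card_le_univ _
  rw [image_cycleLabel_univ, card_disjSum, card_compl, sign_of_cycleType, sum_cycleType, hcard]
  push_cast
  rw [← pow_add, show #σ.support + #σ.cycleFactorsFinset +
      (#σ.cycleFactorsFinset + (Fintype.card ι - #σ.support)) =
      Fintype.card ι + 2 * #σ.cycleFactorsFinset by omega, pow_add, pow_mul]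
  simp

end Equiv.Perm

namespace Finpartition

variable {ι R : Type*} [Fintype ι] [DecidableEq ι] [CommRing R]

def blockRestrict (π : Finpartition (univ : Finset ι)) (M : Matrix ι ι R) : Matrix ι ι R :=
  Matrix.of fun i j => if π.part j = π.part i then M i j else 0

theorem det_blockRestrict_eq_prod (π : Finpartition (univ : Finset ι)) (M : Matrix ι ι R) :
    (π.blockRestrict M).det = ∏ b ∈ π.parts, (M.submatrix ((↑) : b → ι) (↑)).det := by
  let e := Fintype.equivFin (Finset ι)
  have hBT : (π.blockRestrict M).BlockTriangular (e ∘ π.part) := fun i j hij =>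
    if_neg fun h => hij.ne (by simp [h])
  rw [hBT.det, ← image_image, image_part, prod_image fun _ _ _ _ h => e.injective h]
  refine prod_congr rfl fun B hB => ?_
  let g : {i // (e ∘ π.part) i = e B} ≃ B :=
    Equiv.subtypeEquivRight fun i => e.injective.eq_iff.trans (π.part_eq_iff_mem hB)
  have hblock : (π.blockRestrict M).toSquareBlock (e ∘ π.part) (e B) =
      (M.submatrix ((↑) : B → ι) (↑)).submatrix g g := by
    ext ⟨i, hi⟩ ⟨j, hj⟩
    simp only [Function.comp_apply, e.injective.eq_iff] at hi hj
    change (if π.part j = π.part i then M i j else 0) = M i j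
    rw [hi, hj, if_pos rfl]
  rw [hblock, Matrix.det_submatrix_equiv_self]

theorem det_blockRestrict_eq_sum (π : Finpartition (univ : Finset ι)) (M : Matrix ι ι R) :
    (π.blockRestrict M).det =
      ∑ σ : Perm ι with ∀ i, π.part (σ i) = π.part i, ((sign σ : ℤ) : R) * ∏ i, M i (σ i) := by
  rw [← Matrix.det_transpose, Matrix.det_apply, sum_filter]
  refine sum_congr rfl fun σ _ => ?_
  simp only [Matrix.transpose_apply, blockRestrict, Matrix.of_apply, Fintype.prod_ite_zero,
    Units.smul_def, zsmul_eq_mul]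
  split_ifs <;> simp

end Finpartition

section PermanentExpansion

variable {ι : Type*} [Fintype ι] [DecidableEq ι]

theorem forall_isSaturated_cycleLabel_iff (σ : Perm ι) (π : Finpartition (univ : Finset ι)) :
    (∀ b ∈ π.parts, IsSaturated σ.cycleLabel b) ↔ ∀ i, π.part (σ i) = π.part i := by
  constructor
  · intro h i
    have hpart := π.part_mem.2 (mem_univ i)
    exact π.part_eq_of_mem hpart (h _ hpart (π.mem_part (mem_univ i))
      (cycleLabel_eq_iff.2 (SameCycle.refl σ i).apply_right.symm))
  · intro h b hb c d hc hdc
    obtain ⟨k, -, rfl⟩ := (cycleLabel_eq_iff.1 hdc.symm).exists_pow_eq'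
    have hpow : ∀ k : ℕ, π.part ((σ ^ k) c) = π.part c := by
      intro k
      induction k with
      | zero => rfl
      | succ k ih => rw [pow_succ', Perm.mul_apply, h, ih]
    rw [← π.part_eq_of_mem hb hc, ← hpow k]
    exact π.mem_part (mem_univ _)

theorem sum_fallF_mul_prod_det_submatrix (M : Matrix ι ι ℂ) (x : ℂ) :
    ∑ π : Finpartition (univ : Finset ι),
        fallF x #π.parts * ∏ b ∈ π.parts, (M.submatrix ((↑) : b → ι) (↑)).det =
      ∑ σ : Perm ι, ((sign σ : ℤ) : ℂ) * x ^ #(univ.image σ.cycleLabel) * ∏ i, M i (σ i) := by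
  have sum_fallF (σ : Perm ι) :
      ∑ π : Finpartition (univ : Finset ι) with ∀ i, π.part (σ i) = π.part i, fallF x #π.parts =
        x ^ #(univ.image σ.cycleLabel) := by
    rw [← sum_fallF_card_parts_of_isSaturated (fun _ _ _ _ => mem_univ _) x]
    refine sum_congr ?_ fun _ _ => rfl
    ext π
    simp only [mem_filter, mem_univ, true_and, forall_isSaturated_cycleLabel_iff]
  calc _ = ∑ π : Finpartition (univ : Finset ι), ∑ σ : Perm ι with ∀ i, π.part (σ i) = π.part i,
          fallF x #π.parts * (((sign σ : ℤ) : ℂ) * ∏ i, M i (σ i)) := by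
        simp_rw [← Finpartition.det_blockRestrict_eq_prod, Finpartition.det_blockRestrict_eq_sum,
          mul_sum]
    _ = ∑ σ : Perm ι, ∑ π : Finpartition (univ : Finset ι) with ∀ i, π.part (σ i) = π.part i,
          fallF x #π.parts * (((sign σ : ℤ) : ℂ) * ∏ i, M i (σ i)) :=
        sum_comm' fun _ _ => by simp
    _ = _ := by
        refine sum_congr rfl fun σ _ => ?_
        rw [← sum_mul, sum_fallF]
        ring

end PermanentExpansion

theorem perm_as_det_combination (n : ℕ) (M : Matrix (Fin n) (Fin n) ℂ) :
    (-1 : ℂ) ^ n * aper 1 M =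
      ∑ π : Finpartition (Finset.univ : Finset (Fin n)),
        fallF (-1) π.parts.card * ∏ b ∈ π.parts, (subM M b).det := by
  calc (-1 : ℂ) ^ n * aper 1 M
      = ∑ σ : Perm (Fin n), ((sign σ : ℤ) : ℂ) * (-1) ^ #(univ.image σ.cycleLabel) *
          ∏ i, M i (σ i) := by
        simp only [aper, one_pow, one_mul, mul_sum, sign_mul_neg_one_pow_card_image_cycleLabel,
          Fintype.card_fin]
    _ = _ := (sum_fallF_mul_prod_det_submatrix M (-1)).symm
end

section
/- For any α ∈ ℂ and any n×n complex matrices A and B, per_α(AB) = ∑_{x ∈ [n]^n} per_α(B_x) · ∏_{j=1}^n A_{j,x_j}, where B_x is the n×n matrix whose j-th row is the x_j-th row of B. -/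
open Finset

/-! Row `j` of `A * B` is `∑ₖ A j k • B k`, so expanding `∏ⱼ (A * B) j (σ j)` by distributivity
and exchanging the sums over `σ` and over `x : β → m` proves the identity. Only multilinearity
in the rows enters: the weight `α ^ numCycles σ` is carried along unchanged. -/

theorem Matrix.prod_mul_apply_eq_sum {β m γ R : Type*} [Fintype β] [DecidableEq β] [Fintype m]
    [CommSemiring R] (A : Matrix β m R) (B : Matrix m γ R) (f : β → γ) :
    ∏ j, (A * B) j (f j) = ∑ x : β → m, (∏ j, A j (x j)) * ∏ j, B (x j) (f j) := by
  simp only [Matrix.mul_apply, prod_univ_sum, Fintype.piFinset_univ, prod_mul_distrib]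

theorem aper_mul_eq_sum {β m : Type*} [Fintype β] [DecidableEq β] [Fintype m]
    (α : ℂ) (A : Matrix β m ℂ) (B : Matrix m β ℂ) :
    aper α (A * B) =
      ∑ x : β → m, aper α (Matrix.of fun i j => B (x i) j) * ∏ j, A j (x j) := by
  simp only [aper, Matrix.prod_mul_apply_eq_sum, Matrix.of_apply, mul_sum, sum_mul]
  rw [sum_comm]
  exact sum_congr rfl fun x _ => sum_congr rfl fun σ _ => by ring

theorem aper_mul (n : ℕ) (α : ℂ) (A B : Matrix (Fin n) (Fin n) ℂ) :
    aper α (A * B) =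
      ∑ x : Fin n → Fin n,
        aper α (Matrix.of fun i j => B (x i) j) * ∏ j, A j (x j) :=
  aper_mul_eq_sum α A B
end

section
/- For any α ∈ ℂ and any n×n complex matrix A, per_α(A + I_n) = ∑_{b ⊆ [n]} α^{n − |b|} per_α(A[b]), where A[b] is the principal submatrix of A indexed by b (and per_α of the empty matrix equals 1). -/
open Finset

/-!
Expand `∏ⱼ (A + 1)_{j,σ(j)} = ∑_b ∏_{j ∈ b} A_{j,σ(j)} · [σ fixes every point outside b]`
and exchange the sums over `σ` and `b`. For fixed `b`, the permutations fixing `bᶜ` pointwise are exactly the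
extensions `ofSubtype τ` of permutations `τ` of `b`, and such an extension has the cycles of `τ`
together with `|bᶜ|` extra fixed points, which produces the factor `α ^ |bᶜ|`.
-/

open Equiv Equiv.Perm

theorem prod_ofSubtype_apply {β R : Type*} [DecidableEq β] [CommMonoid R] (M : Matrix β β R)
    (b : Finset β) (τ : Perm b) :
    ∏ j ∈ b, M j (ofSubtype τ j) = ∏ j : b, M j (τ j) := by
  rw [← prod_coe_sort]
  simp only [ofSubtype_apply_coe]

section
variable {β : Type*} [Fintype β] [DecidableEq β]

theorem Equiv.Perm.card_fixed_add_card_support_eq_card (σ : Perm β) :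
    #{x | σ x = x} + #σ.support = Fintype.card β :=
  card_filter_add_card_filter_not _

theorem numCycles_ofSubtype (b : Finset β) (τ : Perm b) :
    numCycles (ofSubtype τ) = numCycles τ + #bᶜ := by
  have hext := card_fixed_add_card_support_eq_card (ofSubtype τ)
  have hsub := card_fixed_add_card_support_eq_card τ
  have hsupp : #(ofSubtype τ).support = #τ.support := by
    rw [support_ofSubtype, card_map]
    -- the two sides differ only in the `DecidableEq` instance used for `τ.support`
    convert rfl
  rw [Fintype.card_coe] at hsub
  have hcard := card_add_card_compl b
  unfold numCycles
  rw [cycleType_ofSubtype]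
  omega

theorem sum_ite_fixing_compl_eq_sum_ofSubtype {M : Type*} [AddCommMonoid M]
    (b : Finset β) (g : Perm β → M) :
    ∑ σ : Perm β, (if ∀ j, j ∉ b → σ j = j then g σ else 0) =
      ∑ τ : Perm b, g (ofSubtype τ) := by
  rw [← sum_filter, sum_subtype (p := fun σ : Perm β => ∀ j, j ∉ b → σ j = j) _ fun σ => by
    simp only [mem_filter, mem_univ, true_and]]
  exact (Fintype.sum_equiv (Perm.subtypeEquivSubtypePerm (· ∈ b)) _ _ fun _ => rfl).symm

theorem prod_add_one_apply {R : Type*} [CommSemiring R] (M : Matrix β β R) (σ : Perm β) :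
    ∏ j, (M + 1) j (σ j) =
      ∑ b : Finset β, (∏ j ∈ b, M j (σ j)) * if ∀ j, j ∉ b → σ j = j then 1 else 0 := by
  simp only [Matrix.add_apply, Matrix.one_apply]
  rw [prod_add, powerset_univ]
  refine sum_congr rfl fun b _ => ?_
  rw [← compl_eq_univ_sdiff, prod_boole]
  simp only [mem_compl, eq_comm]

theorem aper_add_one_eq_sum_aper_submatrix (α : ℂ) (A : Matrix β β ℂ) :
    aper α (A + 1) =
      ∑ b : Finset β, α ^ #bᶜ * aper α (A.submatrix ((↑) : b → β) (↑)) := by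
  calc aper α (A + 1)
      = ∑ b : Finset β, ∑ σ : Perm β, if ∀ j, j ∉ b → σ j = j then
          α ^ numCycles σ * ∏ j ∈ b, A j (σ j) else 0 := by
        simp only [aper, prod_add_one_apply, mul_sum, mul_ite, mul_one, mul_zero]
        exact sum_comm
    _ = ∑ b : Finset β, ∑ τ : Perm b,
          α ^ numCycles (ofSubtype τ) * ∏ j ∈ b, A j (ofSubtype τ j) := by
        simp only [sum_ite_fixing_compl_eq_sum_ofSubtype]
    _ = _ := by
        refine sum_congr rfl fun b _ => ?_
        rw [aper, mul_sum]
        refine sum_congr rfl fun τ _ => ?_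
        rw [numCycles_ofSubtype, prod_ofSubtype_apply, pow_add]
        simp only [Matrix.submatrix_apply]
        ring

end

theorem aper_add_one (n : ℕ) (α : ℂ) (A : Matrix (Fin n) (Fin n) ℂ) :
    aper α (A + 1) =
      ∑ b : Finset (Fin n), α ^ (n - b.card) * aper α (subM A b) := by
  rw [aper_add_one_eq_sum_aper_submatrix]
  refine sum_congr rfl fun b _ => ?_
  rw [card_compl, Fintype.card_fin]
  rfl
end

section
/- Let π be a set partition of [n] and let Π be the n×n 0-1 matrix with Π_{ij} = 1 iff i and j lie in the same block of π. Then for any α ∈ ℂ, per_α(Π) = ∏_{b ∈ π} α^{↑|b|}, where α^{↑m} := α(α+1)⋯(α+m−1) is the rising factorial. -/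
open Finset

/-! A permutation contributes to `per_α(Π)` exactly when it maps every block of `π` to itself,
and such permutations are the families of permutations of the individual blocks, whose cycles
are the cycles of the pieces. Hence the sum factors over the blocks, and it remains to show
`∑_{σ ∈ S_m} α^{#σ} = α^{↑m}`. For this, a permutation of `m + 1` points is obtained from one
of `m` points either by adding the new point as a fixed point (one more cycle, factor `α`) or
by inserting it after one of the `m` old points into an existing cycle (factor `m`). -/

open Equiv

namespace Equiv.Perm

variable {β : Type*} [Fintype β] [DecidableEq β]

theorem numCycles_eq_card_cycleType_add (σ : Perm β) :
    numCycles σ = σ.cycleType.card + (Fintype.card β - σ.cycleType.sum) := by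
  rw [numCycles, ← card_fixedPoints, Fintype.card_subtype]
  rfl

theorem numCycles_one : numCycles (1 : Perm β) = Fintype.card β := by
  simp [numCycles_eq_card_cycleType_add]

theorem numCycles_mul_of_disjoint {d e : Perm β} (h : Disjoint d e) :
    numCycles (d * e) + Fintype.card β = numCycles d + numCycles e := by
  have hle := sum_cycleType_le (d * e)
  rw [h.cycleType_mul, Multiset.sum_add] at hle
  rw [numCycles_eq_card_cycleType_add, numCycles_eq_card_cycleType_add,
    numCycles_eq_card_cycleType_add, h.cycleType_mul, Multiset.card_add,
    Multiset.sum_add]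
  omega

theorem IsCycle.numCycles_eq {c : Perm β} (hc : IsCycle c) :
    numCycles c = Fintype.card β - #c.support + 1 := by
  rw [numCycles_eq_card_cycleType_add, hc.cycleType, Multiset.card_singleton,
    Multiset.sum_singleton]
  omega

theorem IsCycle.numCycles_swap_mul {c : Perm β} (hc : IsCycle c) {x : β} (hx : c x ≠ x) :
    numCycles (swap x (c x) * c) = numCycles c + 1 := by
  have hsupp := c.support.card_le_univ
  rw [hc.numCycles_eq]
  by_cases hcc : c (c x) = x
  · have hswap := hc.eq_swap_of_apply_apply_eq_self hx hcc
    have htwo : c.support.card = 2 := by rw [hswap, card_support_swap (Ne.symm hx)]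
    have hone : swap x (c x) * c = 1 := by
      nth_rw 2 [hswap]
      exact swap_mul_self _ _
    rw [hone, numCycles_one]
    omega
  · have hx' : x ∈ c.support := mem_support.2 hx
    have hcard : (swap x (c x) * c).support.card + 1 = c.support.card := by
      rw [support_swap_mul_eq c x hcc, card_sdiff_of_subset (singleton_subset_iff.2 hx'),
        card_singleton, Nat.sub_add_cancel (card_pos.2 ⟨x, hx'⟩)]
    rw [(hc.swap_mul hx hcc).numCycles_eq]
    omega

theorem numCycles_swap_mul (f : Perm β) {x : β} (hx : f x ≠ x) :
    numCycles (swap x (f x) * f) = numCycles f + 1 := by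
  -- `f = (f * c⁻¹) * c` with disjoint factors, and the swap only acts inside the cycle `c` of `x`
  set c := f.cycleOf x
  have hcx : c x = f x := f.cycleOf_apply_self x
  have hc : IsCycle c := f.isCycle_cycleOf hx
  have hdc : Disjoint (f * c⁻¹) c := disjoint_mul_inv_of_mem_cycleFactorsFinset
    (cycleOf_mem_cycleFactorsFinset_iff.2 (mem_support.2 hx))
  have hswap : (swap x (f x)).support ⊆ c.support := by
    rw [support_swap (Ne.symm hx), ← hcx, insert_subset_iff, singleton_subset_iff,
      apply_mem_support, and_self]
    exact mem_support.2 (hcx ▸ hx)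
  have hsc : (swap x (f x) * c).support ⊆ c.support := fun y hy =>
    (mem_support_swap_mul_imp_mem_support_ne (hcx ▸ hy)).1
  have hdecomp : swap x (f x) * f = f * c⁻¹ * (swap x (f x) * c) := by
    rw [← mul_assoc, (hdc.mono subset_rfl hswap).commute.eq, mul_assoc, inv_mul_cancel_right]
  have h1 := numCycles_mul_of_disjoint (hdc.mono subset_rfl hsc)
  have h2 := numCycles_mul_of_disjoint hdc
  have h3 := hc.numCycles_swap_mul (x := x) (by rwa [hcx])
  rw [inv_mul_cancel_right] at h2
  rw [hcx] at h3
  rw [hdecomp]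
  omega

theorem numCycles_extendDomain {γ : Type*} [Fintype γ] [DecidableEq γ] {p : γ → Prop}
    [DecidablePred p] (f : β ≃ Subtype p) (σ : Perm β) :
    numCycles (σ.extendDomain f) + Fintype.card β = numCycles σ + Fintype.card γ := by
  have hle : Fintype.card β ≤ Fintype.card γ :=
    Fintype.card_le_of_embedding (f.toEmbedding.trans (Function.Embedding.subtype p))
  have hσ := sum_cycleType_le σ
  rw [numCycles_eq_card_cycleType_add, numCycles_eq_card_cycleType_add, cycleType_extendDomain]
  omega

theorem numCycles_permCongr {γ : Type*} [Fintype γ] [DecidableEq γ] (e : β ≃ γ) (σ : Perm β) :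
    numCycles (e.permCongr σ) = numCycles σ := by
  set e' := e.trans (subtypeUnivEquiv fun _ => trivial).symm
  have hext : e.permCongr σ = σ.extendDomain e' := by
    ext y
    rw [extendDomain_apply_subtype _ _ trivial]
    simp [e', subtypeUnivEquiv]
  have h := numCycles_extendDomain e' σ
  rw [← hext, Fintype.card_congr e] at h
  omega

theorem numCycles_optionCongr (σ : Perm β) :
    numCycles σ.optionCongr = numCycles σ + 1 := by
  have hext : σ.optionCongr = σ.extendDomain (optionIsSomeEquiv β).symm := by
    ext (_ | y)
    · rw [extendDomain_apply_not_subtype _ _ (by simp)]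
      rfl
    · rw [extendDomain_apply_subtype _ _ (by simp)]
      simp [optionIsSomeEquiv]
  have h := numCycles_extendDomain (optionIsSomeEquiv β).symm σ
  rw [← hext, Fintype.card_option] at h
  omega

theorem numCycles_swap_none_mul_optionCongr (σ : Perm β) (a : β) :
    numCycles (swap none (some a) * σ.optionCongr) = numCycles σ := by
  -- removing `none` from its cycle gives back `σ.optionCongr`
  have h := numCycles_swap_mul (swap none (some a) * σ.optionCongr) (x := none) (by simp)
  rw [mul_apply, optionCongr_apply, Option.map_none, swap_apply_left, swap_mul_self_mul,
    numCycles_optionCongr] at h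
  omega

theorem sum_pow_numCycles_congr {R γ : Type*} [CommSemiring R] [Fintype γ] [DecidableEq γ]
    (x : R) (e : β ≃ γ) :
    ∑ σ : Perm β, x ^ numCycles σ = ∑ σ : Perm γ, x ^ numCycles σ :=
  Fintype.sum_equiv e.permCongr _ _ fun σ => by rw [numCycles_permCongr]

theorem sum_pow_numCycles_option {R : Type*} [CommSemiring R] (x : R) :
    ∑ σ : Perm (Option β), x ^ numCycles σ =
      (x + Fintype.card β) * ∑ σ : Perm β, x ^ numCycles σ := by
  rw [← Fintype.sum_equiv decomposeOption.symm _ _ fun _ => rfl, Fintype.sum_prod_type,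
    Fintype.sum_option]
  simp only [decomposeOption_symm_apply, swap_self, ← one_def, one_mul, numCycles_optionCongr,
    numCycles_swap_none_mul_optionCongr, pow_succ, sum_const, card_univ, nsmul_eq_mul]
  rw [← sum_mul, add_mul, mul_comm]

theorem sum_pow_numCycles (x : ℂ) :
    ∑ σ : Perm β, x ^ numCycles σ = riseF x (Fintype.card β) := by
  suffices hfin : ∀ m, ∑ σ : Perm (Fin m), x ^ numCycles σ = riseF x m by
    rw [← hfin, sum_pow_numCycles_congr x (Fintype.equivFin β)]
  intro m
  induction m with
  | zero => simp [riseF, numCycles_eq_card_cycleType_add]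
  | succ m ih =>
    rw [sum_pow_numCycles_congr x (finSuccEquiv m), sum_pow_numCycles_option, ih, riseF, riseF,
      prod_range_succ, Fintype.card_fin]
    ring

theorem sigmaCongrRight_mulSingle {ι : Type*} [DecidableEq ι] {F : ι → Type*} (i : ι)
    (σ : Perm (F i)) :
    sigmaCongrRight (Pi.mulSingle i σ) = σ.extendDomain (sigmaSubtype i).symm := by
  ext ⟨j, a⟩ : 1
  by_cases hj : j = i
  · subst hj
    rw [extendDomain_apply_subtype σ (sigmaSubtype j).symm (b := ⟨j, a⟩) rfl]
    simp [sigmaSubtype]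
  · rw [extendDomain_apply_not_subtype σ (sigmaSubtype i).symm (b := ⟨j, a⟩) hj]
    simp [hj]

section sigma

variable {ι : Type*} [Fintype ι] [DecidableEq ι] {F : ι → Type*} [∀ i, Fintype (F i)]
  [∀ i, DecidableEq (F i)]

theorem cycleType_sigmaCongrRight (τ : ∀ i, Perm (F i)) :
    (sigmaCongrRight τ).cycleType = ∑ i, (τ i).cycleType := by
  set ρ : ι → Perm (Σ i, F i) := fun i => sigmaCongrRight (Pi.mulSingle i (τ i))
  have hdisj : Set.Pairwise (univ : Finset ι) fun i j => Disjoint (ρ i) (ρ j) := by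
    intro i _ j _ hij x
    by_cases hi : x.1 = i
    · right
      simp only [ρ, sigmaCongrRight_mulSingle]
      exact extendDomain_apply_not_subtype _ (sigmaSubtype j).symm (b := x) (hi ▸ hij)
    · left
      simp only [ρ, sigmaCongrRight_mulSingle]
      exact extendDomain_apply_not_subtype _ (sigmaSubtype i).symm (b := x) hi
  have hprod :
      sigmaCongrRight τ = univ.noncommProd ρ (hdisj.imp fun _ _ => Disjoint.commute) := by
    have := Finset.map_noncommProd univ (fun i => Pi.mulSingle i (τ i)) (fun i _ j _ _ =>
      Pi.mulSingle_apply_commute τ i j) (sigmaCongrRightHom F)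
    rw [noncommProd_mulSingle] at this
    exact this
  rw [hprod, Disjoint.cycleType_noncommProd hdisj]
  exact sum_congr rfl fun i _ => by simp [ρ, sigmaCongrRight_mulSingle, cycleType_extendDomain]

theorem numCycles_sigmaCongrRight (τ : ∀ i, Perm (F i)) :
    numCycles (sigmaCongrRight τ) = ∑ i, numCycles (τ i) := by
  have hsum : (sigmaCongrRight τ).cycleType.sum = ∑ i, (τ i).cycleType.sum := by
    rw [cycleType_sigmaCongrRight, Multiset.sum_sum]
  rw [numCycles_eq_card_cycleType_add, hsum, cycleType_sigmaCongrRight, Multiset.card_sum,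
    Fintype.card_sigma, ← sum_tsub_distrib _ fun i _ => sum_cycleType_le (τ i), ← sum_add_distrib]
  simp only [numCycles_eq_card_cycleType_add]

end sigma

section fiberwise

variable {α ι : Type*} [Fintype α] [DecidableEq α] [Fintype ι] [DecidableEq ι] (f : α → ι)

def fiberwiseEquiv : {σ : Perm α // ∀ a, f (σ a) = f a} ≃ ∀ i, Perm {a // f a = i} where
  toFun σ i := σ.1.subtypePerm fun a => by rw [σ.2 a]
  invFun τ := ⟨(sigmaFiberEquiv f).permCongr (sigmaCongrRight τ), fun a => (τ (f a) ⟨a, rfl⟩).2⟩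
  left_inv _ := rfl
  right_inv τ := by
    ext i ⟨a, rfl⟩
    rfl

theorem numCycles_fiberwiseEquiv_symm (τ : ∀ i, Perm {a // f a = i}) :
    numCycles ((fiberwiseEquiv f).symm τ).1 = ∑ i, numCycles (τ i) :=
  (numCycles_permCongr _ _).trans (numCycles_sigmaCongrRight τ)

theorem sum_pow_numCycles_fiberwise (x : ℂ) :
    ∑ σ with ∀ a, f (σ a) = f a, x ^ numCycles σ =
      ∏ i, riseF x (Fintype.card {a // f a = i}) := by
  rw [sum_subtype _ fun σ => mem_filter_univ σ, ← (fiberwiseEquiv f).symm.sum_comp]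
  simp only [numCycles_fiberwiseEquiv_symm, ← prod_pow_eq_pow_sum]
  simp only [← sum_pow_numCycles, Fintype.prod_sum]

end fiberwise

end Equiv.Perm

namespace Finpartition

variable {α : Type*} [Fintype α] [DecidableEq α] (P : Finpartition (univ : Finset α))

theorem card_subtype_part_eq {b : Finset α} (hb : b ∈ P.parts) :
    Fintype.card {a // P.part a = b} = b.card := by
  rw [Fintype.card_subtype]
  congr 1
  ext a
  simp [P.part_eq_iff_mem hb]

theorem prod_card_subtype_part_eq {M : Type*} [CommMonoid M] (g : ℕ → M) (hg : g 0 = 1) :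
    ∏ b, g (Fintype.card {a // P.part a = b}) = ∏ b ∈ P.parts, g b.card := by
  refine (prod_subset (subset_univ P.parts) fun b _ hb => ?_).symm.trans
    (prod_congr rfl fun b hb => by rw [P.card_subtype_part_eq hb])
  have hempty : IsEmpty {a // P.part a = b} :=
    ⟨fun a => hb (a.2 ▸ P.part_mem.2 (mem_univ _))⟩
  rw [Fintype.card_eq_zero, hg]

end Finpartition

theorem aper_partitionMatrix (n : ℕ) (α : ℂ)
    (π : Finpartition (Finset.univ : Finset (Fin n))) :
    aper α (Matrix.of fun i j : Fin n => if j ∈ π.part i then (1 : ℂ) else 0) =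
      ∏ b ∈ π.parts, riseF α b.card := by
  have hblock (σ : Perm (Fin n)) : ∏ j, (if σ j ∈ π.part j then (1 : ℂ) else 0) =
      if ∀ j, π.part (σ j) = π.part j then 1 else 0 := by
    simp [prod_boole, π.mem_part_iff_part_eq_part]
  rw [← π.prod_card_subtype_part_eq (riseF α) (prod_range_zero _),
    ← Perm.sum_pow_numCycles_fiberwise, sum_filter]
  refine sum_congr rfl fun σ _ => ?_
  simp only [Matrix.of_apply, hblock, mul_boole]
  -- the two sides differ only in the `Decidable` instance of the condition
  congr 1
end
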